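/- arXiv:1011.6021 — 8 statements merged into one kernel-verified Lean document; each statement's English description precedes it below -/
import Mathlib

section
/- Let S be a finite set of monomials and t a monomial with t ∉ S. Then |k(t) ∩ k(S)| ≤ |S|, where k(S) is the union of the children of the elements of S. -/
namespace BBD

open Finsupp

variable {σ : Type*}

/-- `t'` is a child of `t`: `t' · y = t` for some variable `y`. -/
def isChild (t' t : σ →₀ ℕ) : Prop := ∃ y : σ, t' + Finsupp.single y 1 = t

/-- The set of children of a monomial `t`. -/
def children (t : σ →₀ ℕ) : Set (σ →₀ ℕ) := {t' | isChild t' t}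

/-- The children of a set of monomials. -/
def childrenSet (S : Set (σ →₀ ℕ)) : Set (σ →₀ ℕ) := ⋃ s ∈ S, children s

/-- The set of parents of a monomial `t`. -/
def parents (t : σ →₀ ℕ) : Set (σ →₀ ℕ) := {t' | isChild t t'}

/-- An order ideal: a nonempty finite set of monomials closed under divisibility. -/
def IsOrderIdeal (O : Set (σ →₀ ℕ)) : Prop :=
  O.Finite ∧ O.Nonempty ∧ ∀ t ∈ O, ∀ t', t' ≤ t → t' ∈ O

/-- The border of a set of monomials: `(T₁ · O) \ O`. -/
def borderOf (O : Set (σ →₀ ℕ)) : Set (σ →₀ ℕ) :=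
  {t | t ∉ O ∧ ∃ t' ∈ O, ∃ y : σ, t = t' + Finsupp.single y 1}


theorem children_inter_childrenSet_card [Fintype σ] (S : Set (σ →₀ ℕ)) (hS : S.Finite)
    (t : σ →₀ ℕ) (ht : t ∉ S) :
    (children t ∩ childrenSet S).ncard ≤ S.ncard := by
  classical
  -- two distinct monomials have at most one common child
  have key : ∀ c₁ c₂ s : σ →₀ ℕ, isChild c₁ t → isChild c₂ t → isChild c₁ s →
      isChild c₂ s → s ≠ t → c₁ = c₂ := by
    rintro c₁ c₂ s ⟨y₁, hy₁⟩ ⟨y₂, hy₂⟩ ⟨z₁, hz₁⟩ ⟨z₂, hz₂⟩ hst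
    by_cases hy : y₁ = y₂
    · subst hy
      exact add_right_cancel (hy₁.trans hy₂.symm)
    · -- derive a contradiction: s = t
      exfalso
      have h1 : c₁ + single y₁ 1 + single z₂ 1 = c₁ + single z₁ 1 + single y₂ 1 := by
        rw [hy₁, hz₁]
        rw [← hy₂, ← hz₂]
        abel
      have h2 : single y₁ 1 + single z₂ 1 = single z₁ 1 + (single y₂ 1 : σ →₀ ℕ) := by
        have := h1
        rw [add_assoc, add_assoc] at this
        exact add_left_cancel this
      have hz1y1 : z₁ = y₁ := by
        by_contra hc
        have := DFunLike.congr_fun h2 y₁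
        simp [Finsupp.single_apply, hc, Ne.symm hy] at this
      apply hst
      rw [← hz₁, hz1y1, hy₁]
  have hmem : ∀ c ∈ children t ∩ childrenSet S, ∃ s, s ∈ S ∧ isChild c s := by
    rintro c ⟨-, hc⟩
    simpa [childrenSet, children] using hc
  choose! f hf1 hf2 using hmem
  apply Set.ncard_le_ncard_of_injOn f (fun c hc => hf1 c hc) _ hS
  intro c₁ h₁ c₂ h₂ hf
  exact key c₁ c₂ (f c₁) h₁.1 h₂.1 (hf2 c₁ h₁) (hf ▸ hf2 c₂ h₂)
    (fun h => ht (h ▸ hf1 c₁ h₁))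

end BBD
end

section
/- Let B be a finite nonempty set of monomials in n variables. There exists an order ideal O with ∂O = B if and only if every t ∈ B satisfies: (1) for all variables x, y with x | t and y ≠ x, at least one of t·y, (t·y)/x, t/x lies in B; (2) there exists a variable x with x | t and t/x ∉ B; (3) for all monomials t', t'' with t' ∈ B, t' | t'', t'' | t, one has t'' ∈ B. -/
/-!
If `B = ∂O` for an order ideal `O`, the three conditions are read off from the fact that every
divisor of a border term either lies in `O` or in `∂O`. Conversely, the only candidate is
`O = ↓B \ B`, where `↓B` is the lower closure of `B`: condition (3) makes it an order ideal, (2) shows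
`B ⊆ ∂O`, and (1) is exactly what is needed, by descending induction inside `↓B`, to see that
multiplying an element of `O` by a variable never leaves `↓B`, i.e. `∂O ⊆ B`.
-/

namespace BBD

open Finsupp

variable {σ : Type*}

theorem _root_.Set.OrdConnected.isLowerSet_lowerClosure_diff {α : Type*} [Preorder α]
    {B : Set α} (hB : B.OrdConnected) : IsLowerSet ((lowerClosure B : Set α) \ B) := by
  rintro s s' hs's ⟨hs, hsB⟩
  obtain ⟨u, hu, hsu⟩ := mem_lowerClosure.mp hs
  exact ⟨mem_lowerClosure.mpr ⟨u, hu, hs's.trans hsu⟩,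
    fun hs'B => hsB (hB.out hs'B hu ⟨hs's, hsu⟩)⟩

theorem add_single_one_le_of_lt {s u : σ →₀ ℕ} {x : σ} (hsu : s ≤ u) (hx : s x < u x) :
    s + single x 1 ≤ u := by
  intro i
  rcases eq_or_ne x i with rfl | hxi
  · simpa using hx
  · simpa [single_apply, hxi] using hsu i

theorem tsub_single_one_lt {u : σ →₀ ℕ} {x : σ} (hx : single x 1 ≤ u) : u - single x 1 < u := by
  conv_rhs => rw [← tsub_add_cancel_of_le hx]
  exact lt_add_of_pos_right _ (by simp [pos_iff_ne_zero])

section Border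

variable {O : Set (σ →₀ ℕ)}

theorem add_single_one_mem_borderOf {s : σ →₀ ℕ} (hs : s ∈ O) (y : σ)
    (hsy : s + single y 1 ∉ O) : s + single y 1 ∈ borderOf O :=
  ⟨hsy, s, hs, y, rfl⟩

theorem mem_borderOf_of_le (hO : IsLowerSet O) {s t : σ →₀ ℕ} (ht : t ∈ borderOf O)
    (hst : s ≤ t) (hs : s ∉ O) : s ∈ borderOf O := by
  obtain ⟨-, t', ht', y, rfl⟩ := ht
  have hy : t' y < s y := by
    by_contra! h
    refine hs (hO (fun i => ?_) ht')
    rcases eq_or_ne y i with rfl | hyi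
    · exact h
    · simpa [single_apply, hyi] using hst i
  have hys : single y 1 ≤ s := single_le_iff.mpr (by omega)
  rw [← tsub_add_cancel_of_le hys]
  refine add_single_one_mem_borderOf (hO (fun i => ?_) ht') y (by rwa [tsub_add_cancel_of_le hys])
  rcases eq_or_ne y i with rfl | hyi
  · simpa using hst y
  · simpa [single_apply, hyi] using hst i

theorem ordConnected_borderOf (hO : IsLowerSet O) : (borderOf O).OrdConnected :=
  ⟨fun _ ht₁ _ ht _ ⟨h₁₂, h₂⟩ =>
    mem_borderOf_of_le hO ht h₂ fun h₂O => ht₁.1 (hO h₁₂ h₂O)⟩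

theorem exists_tsub_single_one_not_mem_borderOf {t : σ →₀ ℕ} (ht : t ∈ borderOf O) :
    ∃ x, single x 1 ≤ t ∧ t - single x 1 ∉ borderOf O := by
  obtain ⟨-, t', ht', y, rfl⟩ := ht
  exact ⟨y, le_add_self, by rw [add_tsub_cancel_right]; exact fun h => h.1 ht'⟩

theorem borderOf_add_single_one_or (hO : IsLowerSet O) {t : σ →₀ ℕ} (ht : t ∈ borderOf O)
    {x : σ} (hx : single x 1 ≤ t) (y : σ) :
    t + single y 1 ∈ borderOf O ∨ t + single y 1 - single x 1 ∈ borderOf O ∨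
      t - single x 1 ∈ borderOf O := by
  by_cases htx : t - single x 1 ∈ O
  · have hswap : t + single y 1 - single x 1 = t - single x 1 + single y 1 :=
      (tsub_add_eq_add_tsub hx).symm
    by_cases htxy : t - single x 1 + single y 1 ∈ O
    · left
      have hty : t + single y 1 = t - single x 1 + single y 1 + single x 1 := by
        rw [add_right_comm, tsub_add_cancel_of_le hx]
      rw [hty]
      refine add_single_one_mem_borderOf htxy x ?_
      rw [← hty]
      exact fun h => ht.1 (hO le_self_add h)
    · right; left
      rw [hswap]
      exact add_single_one_mem_borderOf htx y htxy
  · exact Or.inr (Or.inr (mem_borderOf_of_le hO ht tsub_le_self htx))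

end Border

section LowerClosure

variable {B : Set (σ →₀ ℕ)}

/-- The descent step: when `s ≤ u` is tight in the variable `y`, condition (1) at `u` and a
variable `x` in which `s` is strictly below `u` either absorbs `y` or lets us replace `u` by the
smaller `u / x`. -/
theorem add_single_one_mem_lowerClosure
    (hB : ∀ t ∈ B, ∀ x y : σ, single x 1 ≤ t → y ≠ x →
      t + single y 1 ∈ B ∨ t + single y 1 - single x 1 ∈ B ∨ t - single x 1 ∈ B)
    {s : σ →₀ ℕ} (hs : s ∈ lowerClosure B) (hsB : s ∉ B) (y : σ) :
    s + single y 1 ∈ lowerClosure B := by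
  obtain ⟨u, hu, hsu⟩ := mem_lowerClosure.mp hs
  rw [mem_lowerClosure]
  induction u using WellFoundedLT.induction with
  | ind u ih =>
    by_cases hy : s y < u y
    · exact ⟨u, hu, add_single_one_le_of_lt hsu hy⟩
    obtain ⟨x, hx⟩ : ∃ x, s x < u x := by
      by_contra! h
      exact hsB (le_antisymm hsu h ▸ hu)
    have hxy : y ≠ x := by rintro rfl; exact hy hx
    have hsx : s + single x 1 ≤ u := add_single_one_le_of_lt hsu hx
    have hxu : single x 1 ≤ u := le_add_self.trans hsx
    rcases hB u hu x y hxu hxy with h | h | h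
    · exact ⟨_, h, add_le_add_left hsu _⟩
    · refine ⟨_, h, le_tsub_of_add_le_right ?_⟩
      rw [add_right_comm]
      exact add_le_add_left hsx _
    · exact ih _ (tsub_single_one_lt hxu) h (le_tsub_of_add_le_right hsx)

theorem isOrderIdeal_lowerClosure_diff (hfin : B.Finite) (hne : B.Nonempty) (h0 : 0 ∉ B)
    (hB : B.OrdConnected) : IsOrderIdeal ((lowerClosure B : Set (σ →₀ ℕ)) \ B) := by
  classical
  refine ⟨hfin.lowerClosure.sdiff, ?_, fun t ht t' ht't => hB.isLowerSet_lowerClosure_diff ht't ht⟩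
  obtain ⟨u, hu⟩ := hne
  exact ⟨0, mem_lowerClosure.mpr ⟨u, hu, zero_le⟩, h0⟩

theorem borderOf_lowerClosure_diff
    (h₁ : ∀ t ∈ B, ∀ x y : σ, single x 1 ≤ t → y ≠ x →
      t + single y 1 ∈ B ∨ t + single y 1 - single x 1 ∈ B ∨ t - single x 1 ∈ B)
    (h₂ : ∀ t ∈ B, ∃ x, single x 1 ≤ t ∧ t - single x 1 ∉ B) :
    borderOf ((lowerClosure B : Set (σ →₀ ℕ)) \ B) = B := by
  ext t
  constructor
  · rintro ⟨htO, s, ⟨hs, hsB⟩, y, rfl⟩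
    by_contra htB
    exact htO ⟨add_single_one_mem_lowerClosure h₁ hs hsB y, htB⟩
  · intro htB
    obtain ⟨x, hx, htxB⟩ := h₂ t htB
    rw [← tsub_add_cancel_of_le hx]
    refine add_single_one_mem_borderOf (O := (lowerClosure B : Set (σ →₀ ℕ)) \ B)
      ⟨mem_lowerClosure.mpr ⟨t, htB, tsub_le_self⟩, htxB⟩ x ?_
    rw [tsub_add_cancel_of_le hx]
    exact fun h => h.2 htB

end LowerClosure

theorem exists_orderIdeal_iff_three_conditions_general (B : Set (σ →₀ ℕ))
    (hfin : B.Finite) (hne : B.Nonempty) :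
    (∃ O : Set (σ →₀ ℕ), IsOrderIdeal O ∧ borderOf O = B) ↔
      (∀ t ∈ B,
        (∀ x y : σ, Finsupp.single x 1 ≤ t → y ≠ x →
          (t + Finsupp.single y 1 ∈ B ∨ t + Finsupp.single y 1 - Finsupp.single x 1 ∈ B ∨
            t - Finsupp.single x 1 ∈ B)) ∧
        (∃ x : σ, Finsupp.single x 1 ≤ t ∧ t - Finsupp.single x 1 ∉ B) ∧
        (∀ t1 t2 : σ →₀ ℕ, t1 ∈ B → t1 ≤ t2 → t2 ≤ t → t2 ∈ B)) := by
  constructor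
  · rintro ⟨O, ⟨-, -, hcl⟩, rfl⟩
    have hO : IsLowerSet O := fun t t' ht't ht => hcl t ht t' ht't
    exact fun t ht => ⟨fun x y hx _ => borderOf_add_single_one_or hO ht hx y,
      exists_tsub_single_one_not_mem_borderOf ht,
      fun t1 t2 h1 h12 h2t => (ordConnected_borderOf hO).out h1 ht ⟨h12, h2t⟩⟩
  · intro h
    have h0 : 0 ∉ B := fun h0 => by
      obtain ⟨x, hx, -⟩ := (h 0 h0).2.1
      simpa using hx x
    have hB : B.OrdConnected :=
      ⟨fun t1 h1 t ht t2 ⟨h12, h2t⟩ => (h t ht).2.2 t1 t2 h1 h12 h2t⟩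
    exact ⟨_, isOrderIdeal_lowerClosure_diff hfin hne h0 hB,
      borderOf_lowerClosure_diff (fun t ht => (h t ht).1) (fun t ht => (h t ht).2.1)⟩

theorem exists_orderIdeal_iff_three_conditions [Fintype σ] (B : Set (σ →₀ ℕ))
    (hfin : B.Finite) (hne : B.Nonempty) :
    (∃ O : Set (σ →₀ ℕ), IsOrderIdeal O ∧ borderOf O = B) ↔
      (∀ t ∈ B,
        (∀ x y : σ, Finsupp.single x 1 ≤ t → y ≠ x →
          (t + Finsupp.single y 1 ∈ B ∨ t + Finsupp.single y 1 - Finsupp.single x 1 ∈ B ∨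
            t - Finsupp.single x 1 ∈ B)) ∧
        (∃ x : σ, Finsupp.single x 1 ≤ t ∧ t - Finsupp.single x 1 ∉ B) ∧
        (∀ t1 t2 : σ →₀ ℕ, t1 ∈ B → t1 ≤ t2 → t2 ≤ t → t2 ∈ B)) :=
  exists_orderIdeal_iff_three_conditions_general B hfin hne

end BBD
end

section
/- Let B satisfy the three border conditions, and define O = { t : t ∉ B and ∃ t' ∈ B with t | t' }. Then O is an order ideal (closed under divisors). -/
namespace BBD

open Finsupp

variable {σ : Type*}

section OrdConnected

variable {α : Type*} [Preorder α] {s : Set α}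

theorem _root_.mem_lowerClosure_sdiff_iff {t : α} :
    t ∈ (lowerClosure s : Set α) \ s ↔ t ∉ s ∧ ∃ t' ∈ s, t ≤ t' := by
  rw [Set.mem_sdiff, SetLike.mem_coe, mem_lowerClosure, and_comm]

theorem _root_.Set.OrdConnected.isLowerSet_lowerClosure_sdiff (hs : s.OrdConnected) :
    IsLowerSet ((lowerClosure s : Set α) \ s) := by
  intro t u hut ht
  obtain ⟨htB, t', ht's, htt'⟩ := mem_lowerClosure_sdiff_iff.mp ht
  exact mem_lowerClosure_sdiff_iff.mpr
    ⟨fun hu => htB (hs.out hu ht's ⟨hut, htt'⟩), t', ht's, hut.trans htt'⟩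

end OrdConnected

theorem constructed_O_isOrderIdeal_general (B : Set (σ →₀ ℕ)) (hfin : B.Finite) (hne : B.Nonempty)
    (h2 : ∀ t ∈ B, ∃ x : σ, Finsupp.single x 1 ≤ t ∧ t - Finsupp.single x 1 ∉ B)
    (h3 : ∀ t ∈ B, ∀ t1 t2 : σ →₀ ℕ, t1 ∈ B → t1 ≤ t2 → t2 ≤ t → t2 ∈ B) :
    IsOrderIdeal {t : σ →₀ ℕ | t ∉ B ∧ ∃ t' ∈ B, t ≤ t'} := by
  classical
  have hO : {t : σ →₀ ℕ | t ∉ B ∧ ∃ t' ∈ B, t ≤ t'} = (lowerClosure B : Set _) \ B :=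
    Set.ext fun _ => mem_lowerClosure_sdiff_iff.symm
  have hconn : B.OrdConnected := ⟨fun a ha b hb _ ht => h3 b hb a _ ha ht.1 ht.2⟩
  have hzero : (0 : σ →₀ ℕ) ∉ B := fun h0 => by
    obtain ⟨x, hx, -⟩ := h2 0 h0
    simpa using hx x
  obtain ⟨b, hb⟩ := hne
  rw [hO]
  exact ⟨hfin.lowerClosure.sdiff, ⟨0, mem_lowerClosure_sdiff_iff.mpr ⟨hzero, b, hb, zero_le⟩⟩,
    fun t ht u hut => hconn.isLowerSet_lowerClosure_sdiff hut ht⟩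

theorem constructed_O_isOrderIdeal [Fintype σ] (B : Set (σ →₀ ℕ)) (hfin : B.Finite) (hne : B.Nonempty)
    (h1 : ∀ t ∈ B, ∀ x y : σ, Finsupp.single x 1 ≤ t → y ≠ x →
      (t + Finsupp.single y 1 ∈ B ∨ t + Finsupp.single y 1 - Finsupp.single x 1 ∈ B ∨
        t - Finsupp.single x 1 ∈ B))
    (h2 : ∀ t ∈ B, ∃ x : σ, Finsupp.single x 1 ≤ t ∧ t - Finsupp.single x 1 ∉ B)
    (h3 : ∀ t ∈ B, ∀ t1 t2 : σ →₀ ℕ, t1 ∈ B → t1 ≤ t2 → t2 ≤ t → t2 ∈ B) :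
    IsOrderIdeal {t : σ →₀ ℕ | t ∉ B ∧ ∃ t' ∈ B, t ≤ t'} :=
  constructed_O_isOrderIdeal_general B hfin hne h2 h3

end BBD
end

section
/- Let B satisfy the three border conditions and let O = { t : t ∉ B and ∃ t' ∈ B with t | t' }. Then B ⊆ ∂O, i.e., every element of B is the border of O. -/
namespace BBD

open Finsupp

variable {σ : Type*}

theorem B_subset_border [Fintype σ] (B : Set (σ →₀ ℕ)) (hfin : B.Finite) (hne : B.Nonempty)
    (h1 : ∀ t ∈ B, ∀ x y : σ, Finsupp.single x 1 ≤ t → y ≠ x →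
      (t + Finsupp.single y 1 ∈ B ∨ t + Finsupp.single y 1 - Finsupp.single x 1 ∈ B ∨
        t - Finsupp.single x 1 ∈ B))
    (h2 : ∀ t ∈ B, ∃ x : σ, Finsupp.single x 1 ≤ t ∧ t - Finsupp.single x 1 ∉ B)
    (h3 : ∀ t ∈ B, ∀ t1 t2 : σ →₀ ℕ, t1 ∈ B → t1 ≤ t2 → t2 ≤ t → t2 ∈ B) :
    B ⊆ borderOf {t : σ →₀ ℕ | t ∉ B ∧ ∃ t' ∈ B, t ≤ t'} := by
  intro t ht
  obtain ⟨x, hx, hnb⟩ := h2 t ht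
  refine ⟨fun h => h.1 ht, t - Finsupp.single x 1, ⟨hnb, t, ht, tsub_le_self⟩, x, ?_⟩
  rw [tsub_add_cancel_of_le hx]

end BBD
end

section
/- Let B satisfy the three border conditions and let O = { t : t ∉ B and ∃ t' ∈ B with t | t' }. Then ∂O ⊆ B. -/
namespace BBD

open Finsupp

variable {σ : Type*}

/-! It suffices that `a · y` divides a member of `B` whenever `a ∈ O`. Take `s ∈ B` minimal among
the members of `B` divisible by `a`. As `a ∉ B`, `a` properly divides `s`, hence divides a child
`s / x`, which is not in `B` by minimality. If `y = x` then `a · y ∣ s`; otherwise condition (1)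
at `s` puts `s · y` or `s · y / x` in `B`, and `a · y` divides both. -/
lemma exists_add_single_le_of_lt {a b : σ →₀ ℕ} (h : a < b) :
    ∃ x : σ, a + single x 1 ≤ b := by
  obtain ⟨hle, x, hx⟩ := Finsupp.lt_def.1 h
  refine ⟨x, fun i => ?_⟩
  rcases eq_or_ne i x with rfl | hix
  · simpa using hx
  · simpa [single_eq_of_ne hix] using hle i

lemma exists_mem_add_single_le (B : Set (σ →₀ ℕ))
    (h1 : ∀ t ∈ B, ∀ x y : σ, single x 1 ≤ t → y ≠ x →
      (t + single y 1 ∈ B ∨ t + single y 1 - single x 1 ∈ B ∨ t - single x 1 ∈ B))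
    {a s₀ : σ →₀ ℕ} (ha : a ∉ B) (hs₀ : s₀ ∈ B) (has₀ : a ≤ s₀) (y : σ) :
    ∃ u ∈ B, a + single y 1 ≤ u := by
  obtain ⟨s, ⟨hs, has⟩, hmin⟩ :=
    wellFounded_lt.has_min {u | u ∈ B ∧ a ≤ u} ⟨s₀, hs₀, has₀⟩
  obtain ⟨x, hx⟩ := exists_add_single_le_of_lt (has.lt_of_ne fun h => ha (h ▸ hs))
  have hxs : single x 1 ≤ s := le_of_add_le_right hx
  have hchild : s - single x 1 ∉ B := by
    intro hc
    refine hmin _ ⟨hc, le_tsub_of_add_le_right hx⟩ ?_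
    conv_rhs => rw [← tsub_add_cancel_of_le hxs]
    exact lt_add_of_pos_right _ (by simp [pos_iff_ne_zero])
  rcases eq_or_ne y x with rfl | hyx
  · exact ⟨s, hs, hx⟩
  rcases h1 s hs x y hxs hyx with h | h | h
  · exact ⟨_, h, add_le_add_left has _⟩
  · refine ⟨_, h, le_tsub_of_add_le_right ?_⟩
    rw [add_right_comm]
    exact add_le_add_left hx _
  · exact absurd h hchild

theorem border_subset_B_general (B : Set (σ →₀ ℕ))
    (h1 : ∀ t ∈ B, ∀ x y : σ, Finsupp.single x 1 ≤ t → y ≠ x →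
      (t + Finsupp.single y 1 ∈ B ∨ t + Finsupp.single y 1 - Finsupp.single x 1 ∈ B ∨
        t - Finsupp.single x 1 ∈ B)) :
    borderOf {t : σ →₀ ℕ | t ∉ B ∧ ∃ t' ∈ B, t ≤ t'} ⊆ B := by
  rintro _ ⟨htO, a, ⟨ha, s, hs, has⟩, y, rfl⟩
  by_contra ht
  exact htO ⟨ht, exists_mem_add_single_le B h1 ha hs has y⟩

theorem border_subset_B [Fintype σ] (B : Set (σ →₀ ℕ)) (hfin : B.Finite) (hne : B.Nonempty)
    (h1 : ∀ t ∈ B, ∀ x y : σ, Finsupp.single x 1 ≤ t → y ≠ x →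
      (t + Finsupp.single y 1 ∈ B ∨ t + Finsupp.single y 1 - Finsupp.single x 1 ∈ B ∨
        t - Finsupp.single x 1 ∈ B))
    (h2 : ∀ t ∈ B, ∃ x : σ, Finsupp.single x 1 ≤ t ∧ t - Finsupp.single x 1 ∉ B)
    (h3 : ∀ t ∈ B, ∀ t1 t2 : σ →₀ ℕ, t1 ∈ B → t1 ≤ t2 → t2 ≤ t → t2 ∈ B) :
    borderOf {t : σ →₀ ℕ | t ∉ B ∧ ∃ t' ∈ B, t ≤ t'} ⊆ B :=
  border_subset_B_general B h1

end BBD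
end

section
/- No two monomials from two different regions share a common parent: if t1 ∈ R_i and t2 ∈ R_j with i ≠ j, then there is no monomial t3 with t1, t2 ∈ k(t3). -/
namespace BBD

open Finsupp

variable {σ : Type*}

/-! ### Setup for the 3,4-SAT reduction -/

/-- The indeterminates `x_1,…,x_n, x̄_1,…,x̄_n, c_1,…,c_m, x_{c_1},…,x_{c_m}, X`. -/
abbrev Var (n m : ℕ) := (Fin n ⊕ Fin n) ⊕ (Fin m ⊕ Fin m) ⊕ Unit

variable {n m : ℕ}

def xVar (i : Fin n) : Var n m := Sum.inl (Sum.inl i)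
def xbarVar (i : Fin n) : Var n m := Sum.inl (Sum.inr i)
def cVar (l : Fin m) : Var n m := Sum.inr (Sum.inl (Sum.inl l))
def xcVar (l : Fin m) : Var n m := Sum.inr (Sum.inl (Sum.inr l))
def XVar : Var n m := Sum.inr (Sum.inr ())

variable (occP occN : Fin n → Fin m → Bool)

/-- The set `S_i` of (indices of) clauses in which `X_i` or `X̄_i` appears. -/
def Socc (i : Fin n) : Finset (Fin m) :=
  Finset.univ.filter fun l => occP i l = true ∨ occN i l = true

/-- `t_{C_{x_i}} = (∏_{j ∈ S_i} c_j) · X^{4 - |S_i|}`. -/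
noncomputable def tC (i : Fin n) : Var n m →₀ ℕ :=
  (∑ l ∈ Socc occP occN i, Finsupp.single (cVar l) 1) +
    Finsupp.single XVar (4 - (Socc occP occN i).card)

/-- `t_{X_i} = x_i · x̄_i² · t_{C_{x_i}}`. -/
noncomputable def tX (i : Fin n) : Var n m →₀ ℕ :=
  Finsupp.single (xVar i) 1 + Finsupp.single (xbarVar i) 2 + tC occP occN i

/-- `t_{X̄_i} = x_i² · x̄_i · t_{C_{x_i}}`. -/
noncomputable def tXbar (i : Fin n) : Var n m →₀ ℕ :=
  Finsupp.single (xVar i) 2 + Finsupp.single (xbarVar i) 1 + tC occP occN i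

/-- `P_i = P_{X_i} ∪ P_{X̄_i}`. -/
def Pset (i : Fin n) : Set (Var n m →₀ ℕ) :=
  {t | ∃ l : Fin m, occP i l = true ∧ t = tX occP occN i + Finsupp.single (xcVar l) 1} ∪
  {t | ∃ l : Fin m, occN i l = true ∧ t = tXbar occP occN i + Finsupp.single (xcVar l) 1}

/-- The region `R_i = k(P_i)`, the set of children of `P_i`. -/
def Reg (i : Fin n) : Set (Var n m →₀ ℕ) := childrenSet (Pset occP occN i)

/-!
Measure monomials by their degree in the pair `x_i, x̄_i`. Every element of `P_i` has degree 3
there and every element of `P_j`, `j ≠ i`, degree 0. Passing to a child lowers this degree by at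
most one and passing to a parent raises it by at most one, so elements of `R_i` have degree at
least 2 and elements of `R_j` degree 0, while two children of a common parent differ by at most 1.
-/

def degOn (s : Finset σ) (t : σ →₀ ℕ) : ℕ := ∑ v ∈ s, t v

lemma degOn_add (s : Finset σ) (t u : σ →₀ ℕ) : degOn s (t + u) = degOn s t + degOn s u :=
  Finset.sum_add_distrib

lemma degOn_single_one_le (s : Finset σ) (y : σ) : degOn s (Finsupp.single y 1) ≤ 1 := by
  classical
  simp_rw [degOn, Finsupp.single_apply, Finset.sum_ite_eq]
  split_ifs <;> omega

lemma isChild.degOn_le {t' t : σ →₀ ℕ} (h : isChild t' t) (s : Finset σ) :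
    degOn s t' ≤ degOn s t := by
  obtain ⟨y, rfl⟩ := h
  rw [degOn_add]
  omega

lemma isChild.degOn_le_add_one {t' t : σ →₀ ℕ} (h : isChild t' t) (s : Finset σ) :
    degOn s t ≤ degOn s t' + 1 := by
  obtain ⟨y, rfl⟩ := h
  rw [degOn_add]
  exact Nat.add_le_add_left (degOn_single_one_le s y) _

lemma degOn_le_add_one_of_common_parent {t₁ t₂ t : σ →₀ ℕ} (h₁ : isChild t₁ t)
    (h₂ : isChild t₂ t) (s : Finset σ) : degOn s t₁ ≤ degOn s t₂ + 1 :=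
  (h₁.degOn_le s).trans (h₂.degOn_le_add_one s)

lemma exists_isChild_of_mem_childrenSet {S : Set (σ →₀ ℕ)} {t : σ →₀ ℕ}
    (h : t ∈ childrenSet S) : ∃ p ∈ S, isChild t p := by
  simpa [childrenSet, children] using h

def pairVars (i : Fin n) : Finset (Var n m) := {xVar i, xbarVar i}

lemma degOn_pairVars_tC (i j : Fin n) : degOn (pairVars j) (tC occP occN i) = 0 := by
  simp [degOn, pairVars, tC, xVar, xbarVar, cVar, XVar, Finsupp.single_apply]

lemma degOn_pairVars_of_mem_Pset {i : Fin n} {p : Var n m →₀ ℕ} (hp : p ∈ Pset occP occN i)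
    (j : Fin n) : degOn (pairVars j) p = if j = i then 3 else 0 := by
  rcases hp with ⟨l, -, rfl⟩ | ⟨l, -, rfl⟩ <;>
  · simp only [tX, tXbar, degOn_add, degOn_pairVars_tC]
    rcases eq_or_ne j i with rfl | hji
    · simp [degOn, pairVars, xVar, xbarVar, xcVar, Finsupp.single_apply]
    · simp [degOn, pairVars, xVar, xbarVar, xcVar, Finsupp.single_apply, hji, hji.symm]

lemma two_le_degOn_pairVars_of_mem_Reg {i : Fin n} {t : Var n m →₀ ℕ}
    (ht : t ∈ Reg occP occN i) : 2 ≤ degOn (pairVars i) t := by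
  obtain ⟨p, hp, hchild⟩ := exists_isChild_of_mem_childrenSet ht
  have h := hchild.degOn_le_add_one (pairVars i)
  rw [degOn_pairVars_of_mem_Pset occP occN hp, if_pos rfl] at h
  omega

lemma degOn_pairVars_eq_zero_of_mem_Reg {i j : Fin n} (hij : i ≠ j) {t : Var n m →₀ ℕ}
    (ht : t ∈ Reg occP occN j) : degOn (pairVars i) t = 0 := by
  obtain ⟨p, hp, hchild⟩ := exists_isChild_of_mem_childrenSet ht
  have h := hchild.degOn_le (pairVars i)
  rw [degOn_pairVars_of_mem_Pset occP occN hp, if_neg hij] at h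
  omega

theorem no_common_parent_of_different_regions (i j : Fin n) (hij : i ≠ j)
    (t1 t2 : Var n m →₀ ℕ) (h1 : t1 ∈ Reg occP occN i) (h2 : t2 ∈ Reg occP occN j) :
    ¬ ∃ t3 : Var n m →₀ ℕ, isChild t1 t3 ∧ isChild t2 t3 := by
  rintro ⟨t3, h13, h23⟩
  have hdeg := degOn_le_add_one_of_common_parent h13 h23 (pairVars i)
  have hdeg1 := two_le_degOn_pairVars_of_mem_Reg occP occN h1
  have hdeg2 := degOn_pairVars_eq_zero_of_mem_Reg occP occN hij h2
  omega

end BBD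
end

section
/- For every monomial t ∈ k(P_i) = R_i in the reduction, the number I(t) of distinct variables dividing t satisfies I(t) ≥ |P_i| + 2. -/
namespace BBD

open Finsupp

variable {σ : Type*}

variable {n m : ℕ}

variable (occP occN : Fin n → Fin m → Bool)

lemma pset_ncard_le (hd : ∀ (i : Fin n) (l : Fin m), ¬ (occP i l = true ∧ occN i l = true))
    (i : Fin n) : (Pset occP occN i).ncard ≤ (Socc occP occN i).card := by
  classical
  set f : Fin m → (Var n m →₀ ℕ) := fun l =>
    if occP i l = true then tX occP occN i + Finsupp.single (xcVar l) 1
    else tXbar occP occN i + Finsupp.single (xcVar l) 1 with hf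
  have hsub : Pset occP occN i ⊆ f '' (Socc occP occN i : Set (Fin m)) := by
    rintro t (⟨l, hl, rfl⟩ | ⟨l, hl, rfl⟩)
    · exact ⟨l, by simp [Socc, hl], by simp [hf, hl]⟩
    · refine ⟨l, by simp [Socc, hl], ?_⟩
      have h2 : ¬ occP i l = true := fun h => hd i l ⟨h, hl⟩
      simp [hf, h2]
  calc (Pset occP occN i).ncard ≤ (f '' (Socc occP occN i : Set (Fin m))).ncard :=
        Set.ncard_le_ncard hsub (((Socc occP occN i).finite_toSet).image f)
    _ ≤ (Socc occP occN i : Set (Fin m)).ncard := Set.ncard_image_le ((Socc occP occN i).finite_toSet)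
    _ = (Socc occP occN i).card := Set.ncard_coe_finset _

lemma key_support (i : Fin n) (l : Fin m) (a b : ℕ) (ha : a ≠ 0) (hb : b ≠ 0) :
    (Socc occP occN i).card + 3 ≤
      (Finsupp.single (xVar i) a + Finsupp.single (xbarVar i) b + tC occP occN i +
        Finsupp.single (xcVar l) 1).support.card := by
  classical
  set t' := Finsupp.single (xVar i) a + Finsupp.single (xbarVar i) b + tC occP occN i +
      Finsupp.single (xcVar l) 1 with ht'
  set F : Finset (Var n m) :=
    insert (xVar i) (insert (xbarVar i) (insert (xcVar l) ((Socc occP occN i).image cVar)))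
    with hF
  have hcInj : Function.Injective (cVar (n := n) (m := m)) := by
    intro x y h; simpa [cVar] using h
  have hcard : F.card = (Socc occP occN i).card + 3 := by
    rw [hF]
    rw [Finset.card_insert_of_notMem (by simp [xVar, xbarVar, xcVar, cVar]),
        Finset.card_insert_of_notMem (by simp [xbarVar, xcVar, cVar]),
        Finset.card_insert_of_notMem (by simp [xcVar, cVar]),
        Finset.card_image_of_injective _ hcInj]
  have hsub : F ⊆ t'.support := by
    intro v hv
    rw [Finsupp.mem_support_iff]
    simp only [hF, Finset.mem_insert, Finset.mem_image] at hv
    rcases hv with rfl | rfl | rfl | ⟨l0, hl0, rfl⟩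
    · simp [ht', tC, Finsupp.single_apply, xVar, xbarVar, cVar, xcVar, XVar,
        Finsupp.finset_sum_apply, ha]
    · simp [ht', tC, Finsupp.single_apply, xVar, xbarVar, cVar, xcVar, XVar,
        Finsupp.finset_sum_apply, hb]
    · simp [ht', tC, Finsupp.single_apply, xVar, xbarVar, cVar, xcVar, XVar,
        Finsupp.finset_sum_apply]
    · simp [ht', tC, Finsupp.single_apply, xVar, xbarVar, cVar, xcVar, XVar,
        Finsupp.finset_sum_apply, Finset.sum_ite_eq, hl0]
  calc (Socc occP occN i).card + 3 = F.card := hcard.symm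
    _ ≤ t'.support.card := Finset.card_le_card hsub

theorem indets_lower_bound
    (h4 : ∀ i : Fin n, (Socc occP occN i).card ≤ 4)
    (hd : ∀ (i : Fin n) (l : Fin m), ¬ (occP i l = true ∧ occN i l = true))
    (i : Fin n) (t : Var n m →₀ ℕ) (ht : t ∈ Reg occP occN i) :
    (Pset occP occN i).ncard + 2 ≤ t.support.card := by
  classical
  simp only [Reg, childrenSet, Set.mem_iUnion, children, isChild, Set.mem_setOf_eq] at ht
  obtain ⟨s, hs, y, hy⟩ := ht
  have hsupp : (Socc occP occN i).card + 3 ≤ s.support.card := by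
    rcases hs with ⟨l, hl, rfl⟩ | ⟨l, hl, rfl⟩
    · exact key_support occP occN i l 1 2 one_ne_zero two_ne_zero
    · exact key_support occP occN i l 2 1 two_ne_zero one_ne_zero
  have hsub : s.support \ {y} ⊆ t.support := by
    intro v hv
    rw [Finset.mem_sdiff, Finsupp.mem_support_iff, Finset.mem_singleton] at hv
    rw [Finsupp.mem_support_iff]
    intro h0
    apply hv.1
    rw [← hy, Finsupp.add_apply, h0, Finsupp.single_apply, if_neg (by exact fun h => hv.2 h.symm)]
    rfl
  have h1 : s.support.card ≤ (s.support \ {y}).card + 1 := by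
    have := Finset.card_le_card_sdiff_add_card (s := s.support) (t := {y})
    simpa using this
  have h2 := Finset.card_le_card hsub
  have h3 := pset_ncard_le occP occN hd i
  omega

end BBD
end

section
/- An O-border basis of an ideal a generates a: if G is an O-border basis of a, then the ideal generated by G equals a. -/
/-! Let `V` be the `K`-span of the terms in `O` and `I = ⟨G⟩`. For `t ∈ O` and a variable `x`,
the term `x · t` lies in `O` or in the border, and each border term `b` is congruent modulo `I`
to an element of `V` (namely `b - g_b`). So `V + I` is closed under multiplication by the
variables and contains `1`, hence is the whole ring. Linear independence of `O` modulo `a`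
gives `V ∩ a = 0`, and since `I ⊆ a` the modular law forces `I = a`. -/

namespace BBD

open Finsupp

variable {σ : Type*}

/-! ### Border prebases and border bases -/

/-- `G` is an `O`-border prebasis: there is a bijection `e` from the border of `O` to `G`
such that `e b = b - Σ α_i t_i` with the `t_i ∈ O`. -/
def IsBorderPrebasis {K : Type*} [Field K] (O : Set (σ →₀ ℕ)) (G : Set (MvPolynomial σ K)) :
    Prop :=
  ∃ e : borderOf O ≃ G, ∀ b : borderOf O,
    MvPolynomial.coeff (b : σ →₀ ℕ) (e b : MvPolynomial σ K) = 1 ∧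
    ((e b : MvPolynomial σ K).support : Set (σ →₀ ℕ)) \ {(b : σ →₀ ℕ)} ⊆ O

/-- `G` is an `O`-border basis of the ideal `a`: it is an `O`-border prebasis contained in `a`
such that the residue classes of the elements of `O` form a vector-space basis of the
quotient ring. -/
def IsBorderBasis {K : Type*} [Field K] (O : Set (σ →₀ ℕ)) (a : Ideal (MvPolynomial σ K))
    (G : Set (MvPolynomial σ K)) : Prop :=
  IsBorderPrebasis O G ∧ (∀ g ∈ G, g ∈ a) ∧
  LinearIndependent K
    (fun t : O => Ideal.Quotient.mk a (MvPolynomial.monomial (t : σ →₀ ℕ) (1 : K))) ∧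
  Submodule.span K
    (Set.range fun t : O => Ideal.Quotient.mk a (MvPolynomial.monomial (t : σ →₀ ℕ) (1 : K)))
    = ⊤

theorem IsOrderIdeal.zero_mem {O : Set (σ →₀ ℕ)} (hO : IsOrderIdeal O) : 0 ∈ O :=
  let ⟨_, ⟨t, ht⟩, hdown⟩ := hO
  hdown t ht 0 zero_le

theorem add_single_mem_or_mem_borderOf {O : Set (σ →₀ ℕ)} {t : σ →₀ ℕ} (ht : t ∈ O) (y : σ) :
    t + single y 1 ∈ O ∨ t + single y 1 ∈ borderOf O :=
  (em _).imp_right fun h => ⟨h, t, ht, y, rfl⟩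

section

open MvPolynomial

theorem restrictSupport_inf_eq_bot {R : Type*} [CommRing R] {O : Set (σ →₀ ℕ)}
    {a : Ideal (MvPolynomial σ R)}
    (hli : LinearIndependent R fun t : O => Ideal.Quotient.mk a (monomial (t : σ →₀ ℕ) (1 : R))) :
    restrictSupport R O ⊓ a.restrictScalars R = ⊥ := by
  refine eq_bot_iff.mpr fun p ⟨hpO, hpa⟩ => ?_
  rw [SetLike.mem_coe, restrictSupport_eq_span, Set.image_eq_range,
    Finsupp.mem_span_range_iff_exists_finsupp] at hpO
  obtain ⟨c, rfl⟩ := hpO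
  have hc : c.sum (fun t r => r • Ideal.Quotient.mk a (monomial (t : σ →₀ ℕ) (1 : R))) = 0 := by
    have hmk := Ideal.Quotient.eq_zero_iff_mem.mpr hpa
    rw [← Ideal.Quotient.mkₐ_eq_mk R, map_finsuppSum] at hmk
    simpa only [map_smul, Ideal.Quotient.mkₐ_eq_mk] using hmk
  rw [linearIndependent_iff.mp hli c hc, Finsupp.sum_zero_index]
  exact Submodule.zero_mem _

variable {K : Type*} [Field K] {O : Set (σ →₀ ℕ)} {G : Set (MvPolynomial σ K)}

theorem IsBorderPrebasis.exists_monomial_sub_mem_restrictSupport (hG : IsBorderPrebasis O G)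
    {b : σ →₀ ℕ} (hb : b ∈ borderOf O) : ∃ g ∈ G, monomial b 1 - g ∈ restrictSupport K O := by
  classical
  obtain ⟨e, he⟩ := hG
  obtain ⟨hcoeff, hsupp⟩ := he ⟨b, hb⟩
  refine ⟨e ⟨b, hb⟩, (e ⟨b, hb⟩).2, (mem_restrictSupport_iff K).mpr fun v hv => ?_⟩
  by_cases hvb : v = b
  · subst hvb
    rw [Finset.mem_coe, MvPolynomial.mem_support_iff, coeff_sub, coeff_monomial, if_pos rfl,
      hcoeff, sub_self] at hv
    exact absurd rfl hv
  · have hvg := support_sub σ _ _ hv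
    simp only [support_monomial, one_ne_zero, if_false, Finset.mem_union,
      Finset.mem_singleton, hvb, false_or] at hvg
    exact hsupp ⟨hvg, hvb⟩

theorem IsBorderPrebasis.monomial_mem_restrictSupport_sup_span (hG : IsBorderPrebasis O G)
    {b : σ →₀ ℕ} (hb : b ∈ borderOf O) :
    monomial b (1 : K) ∈ restrictSupport K O ⊔ (Ideal.span G).restrictScalars K := by
  obtain ⟨g, hg, hsub⟩ := hG.exists_monomial_sub_mem_restrictSupport hb
  rw [← sub_add_cancel (monomial b 1) g]
  exact Submodule.add_mem_sup hsub (Ideal.subset_span hg)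

theorem IsBorderPrebasis.mul_X_mem_restrictSupport_sup_span (hG : IsBorderPrebasis O G) (y : σ)
    {p : MvPolynomial σ K} (hp : p ∈ restrictSupport K O) :
    p * X y ∈ restrictSupport K O ⊔ (Ideal.span G).restrictScalars K := by
  rw [restrictSupport_eq_span] at hp
  induction hp using Submodule.span_induction with
  | mem _ h =>
    obtain ⟨t, ht, rfl⟩ := h
    rw [← pow_one (X y), ← monomial_add_single]
    rcases add_single_mem_or_mem_borderOf ht y with hO | hb
    · exact Submodule.mem_sup_left ((monomial_mem_restrictSupport K).mpr (.inl hO))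
    · exact hG.monomial_mem_restrictSupport_sup_span hb
  | zero => simp
  | add _ _ _ _ hp hq => rw [add_mul]; exact add_mem hp hq
  | smul r _ _ hp => rw [smul_mul_assoc]; exact Submodule.smul_mem _ r hp

theorem IsBorderPrebasis.restrictSupport_sup_span_eq_top (hG : IsBorderPrebasis O G)
    (h0 : 0 ∈ O) : restrictSupport K O ⊔ (Ideal.span G).restrictScalars K = ⊤ := by
  rw [eq_top_iff]
  rintro p -
  induction p using MvPolynomial.induction_on with
  | C r => exact Submodule.mem_sup_left ((monomial_mem_restrictSupport K).mpr (.inl h0))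
  | add p q hp hq => exact add_mem hp hq
  | mul_X p y hp =>
    obtain ⟨v, hv, i, hi, rfl⟩ := Submodule.mem_sup.mp hp
    rw [add_mul]
    exact add_mem (hG.mul_X_mem_restrictSupport_sup_span y hv)
      (Submodule.mem_sup_right (Ideal.mul_mem_right _ _ hi))

end

theorem borderBasis_span_general {K : Type*} [Field K]
    (O : Set (σ →₀ ℕ)) (hO : IsOrderIdeal O) (a : Ideal (MvPolynomial σ K))
    (G : Set (MvPolynomial σ K)) (hG : IsBorderBasis O a G) :
    Ideal.span G = a := by
  obtain ⟨hpre, hGa, hli, -⟩ := hG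
  rw [← Submodule.restrictScalars_inj K]
  refine eq_of_le_of_inf_le_of_le_sup (z := MvPolynomial.restrictSupport K O)
    (Submodule.restrictScalars_mono K (Ideal.span_le.mpr hGa)) ?_ ?_
  · rw [inf_comm, restrictSupport_inf_eq_bot hli]
    exact bot_le
  · rw [sup_comm, hpre.restrictSupport_sup_span_eq_top hO.zero_mem]
    exact le_top

theorem borderBasis_span [Fintype σ] {K : Type*} [Field K]
    (O : Set (σ →₀ ℕ)) (hO : IsOrderIdeal O) (a : Ideal (MvPolynomial σ K))
    (G : Set (MvPolynomial σ K)) (hG : IsBorderBasis O a G) :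
    Ideal.span G = a :=
  borderBasis_span_general O hO a G hG

end BBD
end
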